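/- Under consistency, positivity, experimental internal validity, data combination, and the FCAECB assumption b_{t+1}(a,x) = f(x)·b_t(a,x) for all t and a ∈ {0,1} (with Y = S_{T+μ}), the heterogeneous long-term effect is identified as τ(x) = (μ_Y^O(1,x) − μ_Y^O(0,x)) + f(x)^μ · ω_T(x), where ω_T(x) = μ_{S_T}^E(1,x) − μ_{S_T}^E(0,x) + μ_{S_T}^O(0,x) − μ_{S_T}^O(1,x). -/
import Mathlib


open Classical

/-- Conditional expectation of `f` given the event `P`, defined via indicator
ratios, in a finite probability setting with weights `w`. -/
noncomputable def cexp {Ω : Type*} [Fintype Ω] (w : Ω → ℝ) (P : Ω → Prop)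
    (f : Ω → ℝ) : ℝ :=
  (∑ ω, if P ω then w ω * f ω else 0) / (∑ ω, if P ω then w ω else 0)


/-- Numerator of `cexp`. -/
noncomputable def wnum {Ω : Type*} [Fintype Ω] (w : Ω → ℝ) (P : Ω → Prop)
    (f : Ω → ℝ) : ℝ :=
  ∑ ω, if P ω then w ω * f ω else 0

/-- Denominator of `cexp`. -/
noncomputable def wmass {Ω : Type*} [Fintype Ω] (w : Ω → ℝ) (P : Ω → Prop) : ℝ :=
  ∑ ω, if P ω then w ω else 0

lemma cexp_eq {Ω : Type*} [Fintype Ω] (w : Ω → ℝ) (P : Ω → Prop) (f : Ω → ℝ) :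
    cexp w P f = wnum w P f / wmass w P := rfl

/-- Decidability-instance-irrelevant congruence for indicator sums. -/
lemma ite_sum_congr {Ω : Type*} [Fintype Ω] (v : Ω → ℝ) (P Q : Ω → Prop)
    [DecidablePred P] [DecidablePred Q] (h : ∀ ω, P ω ↔ Q ω) :
    (∑ ω, if P ω then v ω else 0) = (∑ ω, if Q ω then v ω else 0) :=
  Finset.sum_congr rfl fun ω _ => by
    by_cases hp : P ω
    · rw [if_pos hp, if_pos ((h ω).mp hp)]
    · rw [if_neg hp, if_neg (fun hq => hp ((h ω).mpr hq))]

lemma wmass_eq_sum {Ω : Type*} [Fintype Ω] (w : Ω → ℝ) (P : Ω → Prop)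
    [inst : DecidablePred P] : wmass w P = ∑ ω, if P ω then w ω else 0 := by
  unfold wmass
  exact @ite_sum_congr _ _ w P P (fun ω => Classical.propDecidable (P ω)) inst
    (fun _ => Iff.rfl)

/-- Congruence for `cexp` w.r.t. equivalent predicates and functions equal
on the event. -/
lemma cexp_congr' {Ω : Type*} [Fintype Ω] (w : Ω → ℝ) {P Q : Ω → Prop}
    {f g : Ω → ℝ} (hPQ : ∀ ω, P ω ↔ Q ω) (hfg : ∀ ω, Q ω → f ω = g ω) :
    cexp w P f = cexp w Q g := by
  unfold cexp
  congr 1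
  · apply Finset.sum_congr rfl; intro ω _
    by_cases h : Q ω
    · rw [if_pos ((hPQ ω).mpr h), if_pos h, hfg ω h]
    · rw [if_neg (fun hP => h ((hPQ ω).mp hP)), if_neg h]
  · apply Finset.sum_congr rfl; intro ω _
    by_cases h : Q ω
    · rw [if_pos ((hPQ ω).mpr h), if_pos h]
    · rw [if_neg (fun hP => h ((hPQ ω).mp hP)), if_neg h]

lemma cexp_sub' {Ω : Type*} [Fintype Ω] (w : Ω → ℝ) (P : Ω → Prop)
    (f g : Ω → ℝ) :
    cexp w P (fun ω => f ω - g ω) = cexp w P f - cexp w P g := by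
  unfold cexp
  rw [← sub_div]
  congr 1
  rw [← Finset.sum_sub_distrib]
  apply Finset.sum_congr rfl; intro ω _
  by_cases h : P ω <;> simp [h, mul_sub]

lemma wnum_split {Ω : Type*} [Fintype Ω] (w : Ω → ℝ) (P Q1 Q0 : Ω → Prop)
    (h : Ω → ℝ) (hiff : ∀ ω, P ω ↔ (Q1 ω ∨ Q0 ω))
    (hdisj : ∀ ω, ¬(Q1 ω ∧ Q0 ω)) :
    wnum w P h = wnum w Q1 h + wnum w Q0 h := by
  unfold wnum
  rw [← Finset.sum_add_distrib]
  apply Finset.sum_congr rfl; intro ω _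
  by_cases h1 : Q1 ω <;> by_cases h0 : Q0 ω
  · exact absurd ⟨h1, h0⟩ (hdisj ω)
  · rw [if_pos ((hiff ω).mpr (Or.inl h1)), if_pos h1, if_neg h0, add_zero]
  · rw [if_pos ((hiff ω).mpr (Or.inr h0)), if_pos h0, if_neg h1, zero_add]
  · rw [if_neg (fun hP => by rcases (hiff ω).mp hP with h | h <;> tauto),
      if_neg h1, if_neg h0, add_zero]

lemma wmass_split {Ω : Type*} [Fintype Ω] (w : Ω → ℝ) (P Q1 Q0 : Ω → Prop)
    (hiff : ∀ ω, P ω ↔ (Q1 ω ∨ Q0 ω)) (hdisj : ∀ ω, ¬(Q1 ω ∧ Q0 ω)) :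
    wmass w P = wmass w Q1 + wmass w Q0 := by
  unfold wmass
  rw [← Finset.sum_add_distrib]
  apply Finset.sum_congr rfl; intro ω _
  by_cases h1 : Q1 ω <;> by_cases h0 : Q0 ω
  · exact absurd ⟨h1, h0⟩ (hdisj ω)
  · rw [if_pos ((hiff ω).mpr (Or.inl h1)), if_pos h1, if_neg h0, add_zero]
  · rw [if_pos ((hiff ω).mpr (Or.inr h0)), if_pos h0, if_neg h1, zero_add]
  · rw [if_neg (fun hP => by rcases (hiff ω).mp hP with h | h <;> tauto),
      if_neg h1, if_neg h0, add_zero]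

/-- Mixture decomposition of a conditional expectation over a disjoint split. -/
lemma cexp_split {Ω : Type*} [Fintype Ω] (w : Ω → ℝ) (P Q1 Q0 : Ω → Prop)
    (h : Ω → ℝ) (hiff : ∀ ω, P ω ↔ (Q1 ω ∨ Q0 ω))
    (hdisj : ∀ ω, ¬(Q1 ω ∧ Q0 ω))
    (h1 : wmass w Q1 ≠ 0) (h0 : wmass w Q0 ≠ 0) :
    cexp w P h
      = (wmass w Q1 * cexp w Q1 h + wmass w Q0 * cexp w Q0 h)
        / (wmass w Q1 + wmass w Q0) := by
  rw [cexp_eq, cexp_eq, cexp_eq, wnum_split w P Q1 Q0 h hiff hdisj,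
    wmass_split w P Q1 Q0 hiff hdisj]
  congr 1
  rw [mul_div_assoc', mul_div_assoc', mul_comm (wmass w Q1), mul_comm (wmass w Q0),
    mul_div_assoc, mul_div_assoc, div_self h1, div_self h0, mul_one, mul_one]

/-- Theorem 4.3 of the paper: identification of the heterogeneous long-term
causal effect under consistency, positivity, experimental internal validity,
data combination, and the Functional Conditional Additive Equi-Confounding
Bias (FCAECB) assumption `b_{t+1}(a,x) = f(x)·b_t(a,x)`, with long-term
outcome `Y = S_{T+μ}` (horizon `m = μ`).  Here `Gp ω = true` is the
experimental group `E`, `Gp ω = false` the observational group `O`. -/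
theorem fcaecb_identification
    {Ω 𝒳 : Type*} [Fintype Ω] (w : Ω → ℝ)
    (hw_nonneg : ∀ ω, 0 ≤ w ω) (hw_sum : ∑ ω, w ω = 1)
    (A Gp : Ω → Bool) (X : Ω → 𝒳)
    (Spot : ℕ → Bool → Ω → ℝ) (Sobs : ℕ → Ω → ℝ)
    (f : 𝒳 → ℝ) (T m : ℕ) (hT : 1 ≤ T) (hm : 1 ≤ m)
    -- consistency
    (hcons : ∀ (t : ℕ) (ω : Ω), Sobs t ω = Spot t (A ω) ω)
    -- positivity
    (hpos : ∀ (x : 𝒳) (a g : Bool),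
      0 < ∑ ω, if X ω = x ∧ A ω = a ∧ Gp ω = g then w ω else 0)
    -- internal validity of the experiment: A ⫫ {S_t(a)} | X, G = E
    (hinternal : ∀ (x : 𝒳) (a a' : Bool) (φ : (ℕ → ℝ) → ℝ),
      cexp w (fun ω => X ω = x ∧ Gp ω = true ∧ A ω = a')
          (fun ω => φ (fun t => Spot t a ω))
        = cexp w (fun ω => X ω = x ∧ Gp ω = true)
          (fun ω => φ (fun t => Spot t a ω)))
    -- data combination: G ⫫ {S_t(a)} | X
    (hexternal : ∀ (x : 𝒳) (a g : Bool) (φ : (ℕ → ℝ) → ℝ),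
      cexp w (fun ω => X ω = x ∧ Gp ω = g)
          (fun ω => φ (fun t => Spot t a ω))
        = cexp w (fun ω => X ω = x) (fun ω => φ (fun t => Spot t a ω)))
    -- arm-specific confounding biases
    (b : ℕ → Bool → 𝒳 → ℝ)
    (hbdef : ∀ (t : ℕ) (a : Bool) (x : 𝒳),
      b t a x
        = cexp w (fun ω => X ω = x ∧ A ω = false ∧ Gp ω = false) (Spot t a)
          - cexp w (fun ω => X ω = x ∧ A ω = true ∧ Gp ω = false) (Spot t a))
    -- FCAECB assumption
    (hfcaecb : ∀ (t : ℕ), 1 ≤ t → ∀ (a : Bool) (x : 𝒳),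
      b (t + 1) a x = f x * b t a x) :
    ∀ x : 𝒳,
      cexp w (fun ω => X ω = x)
          (fun ω => Spot (T + m) true ω - Spot (T + m) false ω)
        = (cexp w (fun ω => X ω = x ∧ A ω = true ∧ Gp ω = false) (Sobs (T + m))
            - cexp w (fun ω => X ω = x ∧ A ω = false ∧ Gp ω = false)
                (Sobs (T + m)))
          + f x ^ m *
            (cexp w (fun ω => X ω = x ∧ A ω = true ∧ Gp ω = true) (Sobs T)
              - cexp w (fun ω => X ω = x ∧ A ω = false ∧ Gp ω = true) (Sobs T)
              + cexp w (fun ω => X ω = x ∧ A ω = false ∧ Gp ω = false) (Sobs T)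
              - cexp w (fun ω => X ω = x ∧ A ω = true ∧ Gp ω = false)
                  (Sobs T)) := by
  intro x
  set Q1 : Ω → Prop := fun ω => X ω = x ∧ A ω = true ∧ Gp ω = false with hQ1
  set Q0 : Ω → Prop := fun ω => X ω = x ∧ A ω = false ∧ Gp ω = false with hQ0
  have hD1 : 0 < wmass w Q1 := by
    rw [wmass_eq_sum]; exact hpos x true false
  have hD0 : 0 < wmass w Q0 := by
    rw [wmass_eq_sum]; exact hpos x false false
  have hD : (0:ℝ) < wmass w Q1 + wmass w Q0 := by positivity
  have hiff : ∀ ω, (X ω = x ∧ Gp ω = false) ↔ (Q1 ω ∨ Q0 ω) := by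
    intro ω; rw [hQ1, hQ0]; cases hA : A ω <;> simp [hA] <;> tauto
  have hdisj : ∀ ω, ¬(Q1 ω ∧ Q0 ω) := by
    intro ω; rw [hQ1, hQ0]; rintro ⟨⟨-, h1, -⟩, ⟨-, h0, -⟩⟩
    rw [h1] at h0; exact Bool.noConfusion h0
  -- mixture decomposition over the observational group
  have mix : ∀ h : Ω → ℝ,
      cexp w (fun ω => X ω = x ∧ Gp ω = false) h
        = (wmass w Q1 * cexp w Q1 h + wmass w Q0 * cexp w Q0 h)
          / (wmass w Q1 + wmass w Q0) :=
    fun h => cexp_split w _ Q1 Q0 h hiff hdisj hD1.ne' hD0.ne'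
  -- move from full population to observational group
  have ext : ∀ (t : ℕ) (a : Bool),
      cexp w (fun ω => X ω = x) (Spot t a)
        = cexp w (fun ω => X ω = x ∧ Gp ω = false) (Spot t a) := by
    intro t a
    have h := hexternal x a false (fun s => s t)
    simpa using h.symm
  -- the key contrast decomposition at any time t
  have contrast : ∀ t : ℕ,
      cexp w (fun ω => X ω = x) (Spot t true)
        - cexp w (fun ω => X ω = x) (Spot t false)
      = (cexp w Q1 (Spot t true) - cexp w Q0 (Spot t false))
        + (wmass w Q0 / (wmass w Q1 + wmass w Q0)) * b t true x
        + (wmass w Q1 / (wmass w Q1 + wmass w Q0)) * b t false x := by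
    intro t
    have hb1 := hbdef t true x
    have hb0 := hbdef t false x
    rw [← hQ1, ← hQ0] at hb1 hb0
    rw [ext t true, ext t false, mix, mix, hb1, hb0]
    field_simp
    ring
  -- experimental arm identification
  have earm : ∀ a : Bool,
      cexp w (fun ω => X ω = x ∧ A ω = a ∧ Gp ω = true) (Sobs T)
        = cexp w (fun ω => X ω = x) (Spot T a) := by
    intro a
    have h1 : cexp w (fun ω => X ω = x ∧ A ω = a ∧ Gp ω = true) (Sobs T)
        = cexp w (fun ω => X ω = x ∧ Gp ω = true ∧ A ω = a)
            (fun ω => Spot T a ω) := by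
      apply cexp_congr' w (fun ω => by tauto)
      intro ω hω
      rw [hcons T ω, hω.2.2]
    rw [h1]
    have h2 := hinternal x a a (fun s => s T)
    simp only at h2
    rw [h2]
    have h3 := hexternal x a true (fun s => s T)
    simpa using h3
  -- observational arms: consistency
  have oarm : ∀ (t : ℕ) (a : Bool),
      cexp w (fun ω => X ω = x ∧ A ω = a ∧ Gp ω = false) (Sobs t)
        = cexp w (fun ω => X ω = x ∧ A ω = a ∧ Gp ω = false) (Spot t a) := by
    intro t a
    apply cexp_congr' w (fun ω => Iff.rfl)
    intro ω hω
    rw [hcons t ω, hω.2.1]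
  -- iterate FCAECB
  have hbpow : ∀ (k : ℕ) (a : Bool), b (T + k) a x = f x ^ k * b T a x := by
    intro k
    induction k with
    | zero => intro a; simp
    | succ n ih =>
        intro a
        have h1 : (1:ℕ) ≤ T + n := le_trans hT (Nat.le_add_right T n)
        have := hfcaecb (T + n) h1 a x
        rw [show T + (n + 1) = (T + n) + 1 from rfl, this, ih a]
        ring
  -- assemble
  rw [cexp_sub', oarm (T + m) true, oarm (T + m) false, oarm T true, oarm T false,
    earm true, earm false]
  rw [show (fun ω => X ω = x ∧ A ω = true ∧ Gp ω = false) = Q1 from rfl,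
    show (fun ω => X ω = x ∧ A ω = false ∧ Gp ω = false) = Q0 from rfl]
  rw [contrast (T + m), hbpow m true, hbpow m false]
  have hcT := contrast T
  linear_combination (-(f x ^ m)) * hcT
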